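/- For every q > 0 one has H̃(q) ≥ √2 − 1, and H̃(q) = √2 − 1 if and only if q = 1/√2; that is, the minimum of H̃ over (0, +∞) is √2 − 1, attained exactly at q = 1/√2. -/

import Mathlib

/-!
For `q ≤ 3√3/2` the cubic has a negative real root `-t`, and the distinguished root is
`t/2 + i √(3t² - 4)/2` with `q (t³ - t) = 1`; then `H̃(q)² = (t-1)/(t+1) · exp (q (2 - t²))`.
Bounding `exp u ≥ 1 + u` leaves a polynomial inequality whose defect is `(t - √2)²` times a
positive factor, so `H̃(q) ≥ √2 - 1` with equality only at `t = √2`, i.e. `q = 1/√2`.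
For larger `q` the distinguished root is the smaller positive real root `s ≤ 1/√3`,
`H̃(q) = (1-s)/(1+s) · exp (q s²)`, and the same bound gives a strict inequality.
-/

open Filter Set

/-- `w` is the root of `q (z^3 - z) + 1 = 0` with `Im w ≥ 0`, `Re w > 0` having the
smallest real part among all such roots. -/
def IsQtilde (q : ℝ) (w : ℂ) : Prop :=
  (q : ℂ) * (w ^ 3 - w) + 1 = 0 ∧ 0 ≤ w.im ∧ 0 < w.re ∧
    ∀ z : ℂ, (q : ℂ) * (z ^ 3 - z) + 1 = 0 → 0 ≤ z.im → 0 < z.re → w.re ≤ z.re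

/-- `H̃(q) = |(q̃ - 1)/(q̃ + 1)| · exp(q · Re(q̃²))` where `q̃` is the distinguished root. -/
noncomputable def Htilde (q : ℝ) : ℝ :=
  ‖(Classical.epsilon (IsQtilde q) - 1) / (Classical.epsilon (IsQtilde q) + 1)‖ *
    Real.exp (q * ((Classical.epsilon (IsQtilde q)) ^ 2).re)

open Complex

lemma eq_or_sq_add_mul_add_sq_eq_one {K : Type*} [Field K] {q z w : K}
    (hz : q * (z ^ 3 - z) + 1 = 0) (hw : q * (w ^ 3 - w) + 1 = 0) :
    z = w ∨ z ^ 2 + w * z + w ^ 2 = 1 := by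
  have hq : q ≠ 0 := by rintro rfl; simp at hw
  have h : q * ((z - w) * (z ^ 2 + w * z + w ^ 2 - 1)) = 0 := by linear_combination hz - hw
  rcases mul_eq_zero.1 ((mul_eq_zero.1 h).resolve_left hq) with h | h
  · exact .inl (sub_eq_zero.1 h)
  · exact .inr (sub_eq_zero.1 h)

namespace IsQtilde

variable {q : ℝ} {w : ℂ}

lemma unique {w' : ℂ} (hw : IsQtilde q w) (hw' : IsQtilde q w') : w = w' := by
  obtain ⟨he, him, hre, hmin⟩ := hw
  obtain ⟨he', him', hre', hmin'⟩ := hw'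
  have hre_eq : w.re = w'.re := le_antisymm (hmin w' he' him' hre') (hmin' w he him hre)
  rcases eq_or_sq_add_mul_add_sq_eq_one he he' with h | h
  · exact h
  have h_im := congrArg Complex.im h
  simp only [pow_two, add_im, mul_im, one_im, hre_eq] at h_im
  -- `3 * re w * (im w + im w') = 0` forces both roots to be real, hence equal
  have him0 : w.im = 0 := by nlinarith
  have him0' : w'.im = 0 := by nlinarith
  exact Complex.ext hre_eq (him0.trans him0'.symm)

lemma Htilde_eq (hw : IsQtilde q w) :
    Htilde q = ‖(w - 1) / (w + 1)‖ * Real.exp (q * (w ^ 2).re) := by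
  rw [Htilde, (Classical.epsilon_spec (⟨w, hw⟩ : ∃ w, IsQtilde q w)).unique hw]

end IsQtilde

lemma Htilde_nonneg (q : ℝ) : 0 ≤ Htilde q :=
  mul_nonneg (norm_nonneg _) (Real.exp_pos _).le

section NonrealRoot

variable {q t : ℝ}

lemma isQtilde_of_nonreal {b : ℝ} (ht : 0 < t) (hb : 0 ≤ b) (htb : 4 * b ^ 2 = 3 * t ^ 2 - 4)
    (hq : q * (t ^ 3 - t) = 1) : IsQtilde q (t / 2 + b * I) := by
  have htbC : 4 * (b : ℂ) ^ 2 = 3 * (t : ℂ) ^ 2 - 4 := by exact_mod_cast htb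
  have hqC : (q : ℂ) * ((t : ℂ) ^ 3 - t) = 1 := by exact_mod_cast hq
  -- the roots are `-t` and the conjugate pair `t / 2 ± b i`
  have hquad : (t / 2 + b * I) ^ 2 - t * (t / 2 + b * I) + t ^ 2 - 1 = 0 := by
    linear_combination (b : ℂ) ^ 2 * I_sq - htbC / 4
  have hroot : (q : ℂ) * ((t / 2 + b * I) ^ 3 - (t / 2 + b * I)) + 1 = 0 := by
    linear_combination (q : ℂ) * (t / 2 + b * I + t) * hquad - hqC
  refine ⟨hroot, by simpa using hb, by simpa using ht, fun z hz _ hz_re => ?_⟩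
  rcases eq_or_sq_add_mul_add_sq_eq_one hz hroot with rfl | h
  · exact le_rfl
  · have hfac : (z - (t / 2 - b * I)) * (z + t) = 0 := by
      linear_combination h - hquad
    rcases mul_eq_zero.1 hfac with h | h
    · simp [sub_eq_zero.1 h]
    · have : z.re = -t := by simp [eq_neg_of_add_eq_zero_left h]
      linarith

lemma Htilde_sq_of_nonreal (ht : 0 < t) (ht2 : 4 ≤ 3 * t ^ 2) (hq : q * (t ^ 3 - t) = 1) :
    Htilde q ^ 2 = (t - 1) / (t + 1) * Real.exp (q * (2 - t ^ 2)) := by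
  set b := √(3 * t ^ 2 - 4) / 2
  have htb : 4 * b ^ 2 = 3 * t ^ 2 - 4 := by
    rw [div_pow, Real.sq_sqrt (by linarith)]; ring
  set w : ℂ := t / 2 + b * I
  have hw_re : w.re = t / 2 := by simp [w]
  have hw_im : w.im = b := by simp [w]
  have hnorm : ‖(w - 1) / (w + 1)‖ ^ 2 = (t - 1) / (t + 1) := by
    have hnum : normSq (w - 1) = t * (t - 1) := by
      rw [normSq_apply, sub_re, sub_im, one_re, one_im, hw_re, hw_im]
      linear_combination htb / 4
    have hden : normSq (w + 1) = t * (t + 1) := by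
      rw [normSq_apply, add_re, add_im, one_re, one_im, hw_re, hw_im]
      linear_combination htb / 4
    rw [Complex.sq_norm, map_div₀, hnum, hden, mul_div_mul_left _ _ ht.ne']
  have hsq_re : (w ^ 2).re = 1 - t ^ 2 / 2 := by
    rw [pow_two, mul_re, hw_re, hw_im]
    linear_combination -htb / 4
  rw [(isQtilde_of_nonreal ht (by positivity) htb hq).Htilde_eq, mul_pow, hnorm, hsq_re,
    ← Real.exp_nat_mul]
  congr 2; ring

lemma sq_sqrt_two_sub_one_lt_of_nonreal (ht : 1 < t) (hne : t ≠ √2)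
    (hq : q * (t ^ 3 - t) = 1) :
    (√2 - 1) ^ 2 < (t - 1) / (t + 1) * Real.exp (q * (2 - t ^ 2)) := by
  have h2 : √2 ^ 2 = 2 := Real.sq_sqrt (by norm_num)
  have h2gt : 1 < √2 := by nlinarith [Real.sqrt_nonneg 2]
  -- with `exp u ≥ 1 + u`, the claim reduces to a polynomial inequality with double root `√2`
  have hpoly : ((t - 1) * (1 + q * (2 - t ^ 2)) - (√2 - 1) ^ 2 * (t + 1)) * (t ^ 3 - t) =
      (t - √2) ^ 2 * ((t - 1) * ((2 * √2 - 2) * t + 1)) := by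
    linear_combination (t - 1) * (2 - t ^ 2) * hq + (-t ^ 4 + 3 * t ^ 3 - t ^ 2 - 2 * t + 1
        + √2 * (2 * t - 2 * t ^ 2)) * h2
  have hpos : 0 < (t - √2) ^ 2 * ((t - 1) * ((2 * √2 - 2) * t + 1)) := by
    have : 0 < (2 * √2 - 2) * t + 1 := by nlinarith
    have : 0 < (t - √2) ^ 2 := by positivity [sub_ne_zero.2 hne]
    positivity
  have hcub : 0 < t ^ 3 - t := by nlinarith
  rw [← hpoly] at hpos
  have hgap := (pos_iff_pos_of_mul_pos hpos).2 hcub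
  calc (√2 - 1) ^ 2 < (t - 1) / (t + 1) * (1 + q * (2 - t ^ 2)) := by
        rw [div_mul_eq_mul_div, lt_div_iff₀ (by linarith)]
        linarith
    _ ≤ (t - 1) / (t + 1) * Real.exp (q * (2 - t ^ 2)) := by
        gcongr
        linarith [Real.add_one_le_exp (q * (2 - t ^ 2))]

end NonrealRoot

section RealRoot

variable {q s : ℝ}

lemma isQtilde_of_real (hs : 0 < s) (hs3 : 3 * s ^ 2 ≤ 1) (hq : q * (s - s ^ 3) = 1) :
    IsQtilde q s := by
  have hroot : (q : ℂ) * ((s : ℂ) ^ 3 - s) + 1 = 0 := by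
    linear_combination -(by exact_mod_cast hq : (q : ℂ) * ((s : ℂ) - (s : ℂ) ^ 3) = 1)
  refine ⟨hroot, by simp, by simpa using hs, fun z hz hz_im hz_re => ?_⟩
  rcases eq_or_sq_add_mul_add_sq_eq_one hz hroot with rfl | h
  · exact le_rfl
  have h_im := congrArg Complex.im h
  have h_re := congrArg Complex.re h
  simp only [pow_two, add_im, add_re, mul_im, mul_re, ofReal_re, ofReal_im, one_im, one_re]
    at h_im h_re
  -- the other roots solve `z ^ 2 + s z + s ^ 2 = 1`; a real one with positive real part
  -- exceeds `s` because `3 s ^ 2 ≤ 1`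
  have hz_real : z.im = 0 := by nlinarith
  rw [ofReal_re]
  nlinarith

lemma Htilde_of_real (hs : 0 < s) (hs3 : 3 * s ^ 2 ≤ 1) (hq : q * (s - s ^ 3) = 1) :
    Htilde q = (1 - s) / (1 + s) * Real.exp (q * s ^ 2) := by
  have hs1 : s < 1 := by nlinarith
  rw [(isQtilde_of_real hs hs3 hq).Htilde_eq, ← ofReal_one, ← ofReal_sub, ← ofReal_add,
    ← ofReal_div, norm_real, ← ofReal_pow, ofReal_re, Real.norm_eq_abs,
    abs_div, abs_of_neg (by linarith), abs_of_pos (by linarith)]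
  ring

lemma sqrt_two_sub_one_lt_of_real (hs : 0 < s) (hs3 : 3 * s ^ 2 ≤ 1)
    (hq : q * (s - s ^ 3) = 1) : √2 - 1 < (1 - s) / (1 + s) * Real.exp (q * s ^ 2) := by
  have h2 : √2 ^ 2 = 2 := Real.sq_sqrt (by norm_num)
  have h2lt : √2 < 3 / 2 := by nlinarith [Real.sqrt_nonneg 2]
  have hs1 : s < 1 := by nlinarith
  have hpoly : ((1 - s) * (1 + q * s ^ 2) - (√2 - 1) * (1 + s)) * (s - s ^ 3) =
      ((2 - √2) + (3 - 2 * √2) * s - √2 * s ^ 2) * (s * (1 - s)) := by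
    linear_combination (1 - s) * s ^ 2 * hq
  have hpos : 0 < ((2 - √2) + (3 - 2 * √2) * s - √2 * s ^ 2) * (s * (1 - s)) := by
    have : 0 < (2 - √2) + (3 - 2 * √2) * s - √2 * s ^ 2 := by nlinarith
    have : 0 < s * (1 - s) := by nlinarith
    positivity
  rw [← hpoly] at hpos
  have hgap := (pos_iff_pos_of_mul_pos hpos).2 (by nlinarith)
  calc √2 - 1 < (1 - s) / (1 + s) * (1 + q * s ^ 2) := by
        rw [div_mul_eq_mul_div, lt_div_iff₀ (by linarith)]
        linarith
    _ ≤ (1 - s) / (1 + s) * Real.exp (q * s ^ 2) := by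
        gcongr
        linarith [Real.add_one_le_exp (q * s ^ 2)]

end RealRoot

lemma exists_nonreal_or_real_root {q : ℝ} (hq : 0 < q) :
    (∃ t, 0 < t ∧ 4 ≤ 3 * t ^ 2 ∧ q * (t ^ 3 - t) = 1) ∨
      ∃ s, 0 < s ∧ 3 * s ^ 2 ≤ 1 ∧ q * (s - s ^ 3) = 1 := by
  have h3 : √3 ^ 2 = 3 := Real.sq_sqrt (by norm_num)
  have h3gt : 3 / 2 < √3 := by nlinarith [Real.sqrt_nonneg 3]
  have hq' : 0 < 1 / q := by positivity
  -- `2√3/9 = √3/3 - (√3/3)³ = (2√3/3)³ - 2√3/3` separates the two regimes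
  rcases le_or_gt (2 * √3 / 9) (1 / q) with h | h
  · left
    have hT : 1 / q ≤ (2 * √3 / 3 + 1 / q) ^ 3 - (2 * √3 / 3 + 1 / q) := by
      have h1 : 1 / q ≤ 2 * √3 / 3 + 1 / q - 1 := by linarith
      have h2 : 1 ≤ (2 * √3 / 3 + 1 / q) * (2 * √3 / 3 + 1 / q + 1) := by nlinarith
      nlinarith [mul_le_mul h1 h2 zero_le_one (by linarith)]
    obtain ⟨t, ⟨ht, -⟩, hft⟩ := intermediate_value_Icc
      (show 2 * √3 / 3 ≤ 2 * √3 / 3 + 1 / q by linarith)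
      (show Continuous fun t : ℝ => t ^ 3 - t by fun_prop).continuousOn
      (show 1 / q ∈ Icc _ _ from ⟨by nlinarith, hT⟩)
    refine ⟨t, by linarith, by nlinarith, ?_⟩
    rw [show t ^ 3 - t = 1 / q from hft, mul_one_div_cancel hq.ne']
  · right
    obtain ⟨s, ⟨hs0, hs⟩, hfs⟩ := intermediate_value_Icc
      (show 0 ≤ √3 / 3 by positivity)
      (show Continuous fun s : ℝ => s - s ^ 3 by fun_prop).continuousOn
      (show 1 / q ∈ Icc _ _ from ⟨by simp [hq.le], by nlinarith⟩)
    have hfs : s - s ^ 3 = 1 / q := hfs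
    have hs_pos : 0 < s := hs0.lt_of_ne (by rintro rfl; norm_num at hfs; linarith)
    refine ⟨s, hs_pos, by nlinarith, ?_⟩
    rw [hfs, mul_one_div_cancel hq.ne']

lemma Htilde_one_div_sqrt_two : Htilde (1 / √2) = √2 - 1 := by
  have h2 : √2 ^ 2 = 2 := Real.sq_sqrt (by norm_num)
  have h2pos : 0 < √2 := by positivity
  have h2gt : 1 < √2 := by nlinarith
  have hq : 1 / √2 * (√2 ^ 3 - √2) = 1 := by field_simp; linear_combination h2
  have hsq := Htilde_sq_of_nonreal h2pos (by linarith) hq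
  rw [h2, sub_self, mul_zero, Real.exp_zero, mul_one] at hsq
  rw [← sq_eq_sq₀ (Htilde_nonneg _) (by linarith), hsq, div_eq_iff (by positivity)]
  linear_combination (1 - √2) * h2

lemma sqrt_two_sub_one_lt_Htilde {q : ℝ} (hq : 0 < q) (hne : q ≠ 1 / √2) :
    √2 - 1 < Htilde q := by
  rcases exists_nonreal_or_real_root hq with ⟨t, ht, ht2, hqt⟩ | ⟨s, hs, hs3, hqs⟩
  · have htne : t ≠ √2 := by
      rintro rfl
      have h2 : √2 ^ 3 - √2 = √2 := by
        linear_combination √2 * Real.sq_sqrt (show (0 : ℝ) ≤ 2 by norm_num)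
      exact hne (eq_one_div_of_mul_eq_one_left (h2 ▸ hqt))
    refine lt_of_pow_lt_pow_left₀ 2 (Htilde_nonneg q) ?_
    rw [Htilde_sq_of_nonreal ht ht2 hqt]
    exact sq_sqrt_two_sub_one_lt_of_nonreal (by nlinarith) htne hqt
  · rw [Htilde_of_real hs hs3 hqs]
    exact sqrt_two_sub_one_lt_of_real hs hs3 hqs

theorem Htilde_min :
    (∀ q : ℝ, 0 < q → Real.sqrt 2 - 1 ≤ Htilde q) ∧
    (∀ q : ℝ, 0 < q → (Htilde q = Real.sqrt 2 - 1 ↔ q = 1 / Real.sqrt 2)) := by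
  refine ⟨fun q hq => ?_, fun q hq => ⟨fun h => ?_, fun h => h ▸ Htilde_one_div_sqrt_two⟩⟩
  · rcases eq_or_ne q (1 / √2) with rfl | hne
    · exact Htilde_one_div_sqrt_two.ge
    · exact (sqrt_two_sub_one_lt_Htilde hq hne).le
  · by_contra hne
    exact (sqrt_two_sub_one_lt_Htilde hq hne).ne' h
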